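/- Let M be the 3-valued matrix with values {1,2,3}, designated values {2,3}, negation ¬1=3, ¬2=3, ¬3=1, and binary operations (x,y) ↦ (x∨y, x∧dy, x⊃y): (1,1)↦(1,1,2), (1,2)↦(2,1,3), (1,3)↦(3,1,2), (2,1)↦(2,1,1), (2,2)↦(3,2,3), (2,3)↦(3,2,2), (3,1)↦(3,1,1), (3,2)↦(3,2,2), (3,3)↦(2,3,2). Then M validates all axiom schemes C1–C15, the designated values are closed under modus ponens for ⊃, and there exist values a,b,c such that ¬(¬(a∨b)∨c) ⊃ (¬(¬a∨c) ∨ ¬(¬b∨c)) is not designated. Consequently the scheme ¬(¬(α∨β)∨γ) ⊃ (¬(¬α∨γ)∨¬(¬β∨γ)) (axiom D20) is not derivable in the system C. -/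
import Mathlib


inductive Fm where
  | atom : Nat → Fm
  | neg : Fm → Fm
  | or : Fm → Fm → Fm
  | dand : Fm → Fm → Fm
  | dimp : Fm → Fm → Fm

inductive CProv : Fm → Prop where
  | mp {a b : Fm} : CProv (.dimp a b) → CProv a → CProv b
  | ax1 {a b : Fm} : CProv (.dimp (a) (.dimp (b) (a)))
  | ax2 {a b c : Fm} : CProv (.dimp (.dimp (a) (.dimp (b) (c))) (.dimp (.dimp (a) (b)) (.dimp (a) (c))))
  | ax3 {a b : Fm} : CProv (.dimp (.dand (a) (b)) (a))
  | ax4 {a b : Fm} : CProv (.dimp (.dand (a) (b)) (b))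
  | ax5 {a b : Fm} : CProv (.dimp (a) (.dimp (b) (.dand (a) (b))))
  | ax6 {a b : Fm} : CProv (.dimp (a) (.or (a) (b)))
  | ax7 {a b : Fm} : CProv (.dimp (b) (.or (a) (b)))
  | ax8 {a b c : Fm} : CProv (.dimp (.dimp (a) (c)) (.dimp (.dimp (b) (c)) (.dimp (.or (a) (b)) (c))))
  | ax9 {a b : Fm} : CProv (.or (a) (.dimp (a) (b)))
  | ax10 {a : Fm} : CProv (.neg (.dand (.neg (a)) (.dand (.neg (.neg (a))) (.neg (.or (a) (.neg (a)))))))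
  | ax11 {a b c : Fm} : CProv (.dimp (.neg (.dand (.neg (a)) (.dand (.neg (b)) (.neg (.or (a) (b)))))) (.neg (.dand (.neg (a)) (.dand (.neg (b)) (.dand (.neg (c)) (.neg (.or (a) (.or (b) (c)))))))))
  | ax12 {a b c : Fm} : CProv (.dimp (.neg (.dand (.neg (a)) (.dand (.neg (b)) (.dand (.neg (c)) (.neg (.or (a) (.or (b) (c)))))))) (.neg (.dand (.neg (a)) (.dand (.neg (c)) (.dand (.neg (b)) (.neg (.or (a) (.or (c) (b)))))))))
  | ax13 {a b c : Fm} : CProv (.dimp (.neg (.dand (.neg (a)) (.dand (.neg (b)) (.dand (.neg (c)) (.neg (.or (a) (.or (b) (c)))))))) (.dimp (.or (a) (.or (b) (.neg (c)))) (.or (a) (b))))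
  | ax14 {a b : Fm} : CProv (.dimp (.neg (.dand (.neg (a)) (.neg (b)))) (.or (a) (b)))
  | ax15 {a b : Fm} : CProv (.dimp (.or (a) (.or (b) (.neg (b)))) (.neg (.dand (.neg (a)) (.neg (.or (b) (.neg (b)))))))

def vneg : Fin 3 → Fin 3 := ![2, 2, 0]

def vor : Fin 3 → Fin 3 → Fin 3 := ![![0, 1, 2], ![1, 2, 2], ![2, 2, 1]]

def vand : Fin 3 → Fin 3 → Fin 3 := ![![0, 0, 0], ![0, 1, 1], ![0, 1, 2]]

def vimp : Fin 3 → Fin 3 → Fin 3 := ![![1, 2, 1], ![0, 2, 1], ![0, 1, 1]]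

def Des (x : Fin 3) : Prop := x ≠ 0

def ev (v : Nat → Fin 3) : Fm → Fin 3
  | .atom n => v n
  | .neg a => vneg (ev v a)
  | .or a b => vor (ev v a) (ev v b)
  | .dand a b => vand (ev v a) (ev v b)
  | .dimp a b => vimp (ev v a) (ev v b)

instance : DecidablePred Des := fun x => instDecidableNot

lemma sound (v : Nat → Fin 3) {f : Fm} (h : CProv f) : Des (ev v f) := by
  induction h with
  | mp _ _ ih1 ih2 =>
    simp only [ev] at *
    exact (by decide : ∀ x y : Fin 3, Des (vimp x y) → Des x → Des y) _ _ ih1 ih2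
  | ax1 => exact (by decide : ∀ x y : Fin 3, Des (vimp x (vimp y x))) _ _
  | ax2 => exact (by decide : ∀ x y z : Fin 3, Des (vimp (vimp x (vimp y z)) (vimp (vimp x y) (vimp x z)))) _ _ _
  | ax3 => exact (by decide : ∀ x y : Fin 3, Des (vimp (vand x y) x)) _ _
  | ax4 => exact (by decide : ∀ x y : Fin 3, Des (vimp (vand x y) y)) _ _
  | ax5 => exact (by decide : ∀ x y : Fin 3, Des (vimp x (vimp y (vand x y)))) _ _
  | ax6 => exact (by decide : ∀ x y : Fin 3, Des (vimp x (vor x y))) _ _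
  | ax7 => exact (by decide : ∀ x y : Fin 3, Des (vimp y (vor x y))) _ _
  | ax8 => exact (by decide : ∀ x y z : Fin 3, Des (vimp (vimp x z) (vimp (vimp y z) (vimp (vor x y) z)))) _ _ _
  | ax9 => exact (by decide : ∀ x y : Fin 3, Des (vor x (vimp x y))) _ _
  | ax10 => exact (by decide : ∀ x : Fin 3, Des (vneg (vand (vneg x) (vand (vneg (vneg x)) (vneg (vor x (vneg x))))))) _
  | ax11 => exact (by decide : ∀ x y z : Fin 3, Des (vimp (vneg (vand (vneg x) (vand (vneg y) (vneg (vor x y))))) (vneg (vand (vneg x) (vand (vneg y) (vand (vneg z) (vneg (vor x (vor y z))))))))) _ _ _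
  | ax12 => exact (by decide : ∀ x y z : Fin 3, Des (vimp (vneg (vand (vneg x) (vand (vneg y) (vand (vneg z) (vneg (vor x (vor y z))))))) (vneg (vand (vneg x) (vand (vneg z) (vand (vneg y) (vneg (vor x (vor z y))))))))) _ _ _
  | ax13 => exact (by decide : ∀ x y z : Fin 3, Des (vimp (vneg (vand (vneg x) (vand (vneg y) (vand (vneg z) (vneg (vor x (vor y z))))))) (vimp (vor x (vor y (vneg z))) (vor x y)))) _ _ _
  | ax14 => exact (by decide : ∀ x y : Fin 3, Des (vimp (vneg (vand (vneg x) (vneg y))) (vor x y))) _ _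
  | ax15 => exact (by decide : ∀ x y : Fin 3, Des (vimp (vor x (vor y (vneg y))) (vneg (vand (vneg x) (vneg (vor y (vneg y))))))) _ _

theorem stmt7 :
    (∀ a b : Fin 3, Des (vimp (a) (vimp (b) (a)))) ∧
    (∀ a b c : Fin 3, Des (vimp (vimp (a) (vimp (b) (c))) (vimp (vimp (a) (b)) (vimp (a) (c))))) ∧
    (∀ a b : Fin 3, Des (vimp (vand (a) (b)) (a))) ∧
    (∀ a b : Fin 3, Des (vimp (vand (a) (b)) (b))) ∧
    (∀ a b : Fin 3, Des (vimp (a) (vimp (b) (vand (a) (b))))) ∧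
    (∀ a b : Fin 3, Des (vimp (a) (vor (a) (b)))) ∧
    (∀ a b : Fin 3, Des (vimp (b) (vor (a) (b)))) ∧
    (∀ a b c : Fin 3, Des (vimp (vimp (a) (c)) (vimp (vimp (b) (c)) (vimp (vor (a) (b)) (c))))) ∧
    (∀ a b : Fin 3, Des (vor (a) (vimp (a) (b)))) ∧
    (∀ a : Fin 3, Des (vneg (vand (vneg (a)) (vand (vneg (vneg (a))) (vneg (vor (a) (vneg (a)))))))) ∧
    (∀ a b c : Fin 3, Des (vimp (vneg (vand (vneg (a)) (vand (vneg (b)) (vneg (vor (a) (b)))))) (vneg (vand (vneg (a)) (vand (vneg (b)) (vand (vneg (c)) (vneg (vor (a) (vor (b) (c)))))))))) ∧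
    (∀ a b c : Fin 3, Des (vimp (vneg (vand (vneg (a)) (vand (vneg (b)) (vand (vneg (c)) (vneg (vor (a) (vor (b) (c)))))))) (vneg (vand (vneg (a)) (vand (vneg (c)) (vand (vneg (b)) (vneg (vor (a) (vor (c) (b)))))))))) ∧
    (∀ a b c : Fin 3, Des (vimp (vneg (vand (vneg (a)) (vand (vneg (b)) (vand (vneg (c)) (vneg (vor (a) (vor (b) (c)))))))) (vimp (vor (a) (vor (b) (vneg (c)))) (vor (a) (b))))) ∧
    (∀ a b : Fin 3, Des (vimp (vneg (vand (vneg (a)) (vneg (b)))) (vor (a) (b)))) ∧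
    (∀ a b : Fin 3, Des (vimp (vor (a) (vor (b) (vneg (b)))) (vneg (vand (vneg (a)) (vneg (vor (b) (vneg (b)))))))) ∧
    (∀ x y : Fin 3, Des x → Des (vimp x y) → Des y) ∧
    (∃ a b c : Fin 3, ¬ Des (vimp (vneg (vor (vneg (vor (a) (b))) (c))) (vor (vneg (vor (vneg (a)) (c))) (vneg (vor (vneg (b)) (c)))))) ∧
    ¬ (∀ a b c : Fm, CProv (.dimp (.neg (.or (.neg (.or (a) (b))) (c))) (.or (.neg (.or (.neg (a)) (c))) (.neg (.or (.neg (b)) (c)))))) := by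
  refine ⟨by decide, by decide, by decide, by decide, by decide, by decide, by decide,
    by decide, by decide, by decide, by decide, by decide, by decide, by decide, by decide,
    by decide, ⟨1, 1, 1, by decide⟩, ?_⟩
  intro h
  have := sound (fun _ => 1) (h (.atom 0) (.atom 0) (.atom 0))
  simp only [ev] at this
  exact this (by decide)
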